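/- Under FiberPool with honest allocation, the total reward over N periods for a miner with hashrate fraction α who allocates xᵢ = Pα in every period equals N·R·α, matching the reward of honest mining; any unequal allocation with the same total PoW yields strictly less. -/

import Mathlib

/-!
The reward `x ↦ R x / (c + x)` with `c = P(1 - α) > 0` is strictly concave, so it lies strictly
below its tangent line at the honest allocation `m = Pα` except at `m` itself:
`f m + f' m (x - m) - f x = R c (x - m)² / ((c + m)² (c + x))`.
Summing over the periods, the linear terms cancel because the allocations average to `m`.
-/

open Finset

theorem Finset.sum_lt_card_mul_of_lt_tangent {ι : Type*} (s : Finset ι) (f : ℝ → ℝ)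
    (x : ι → ℝ) (m k : ℝ) (htangent : ∀ i ∈ s, x i ≠ m → f (x i) < f m + k * (x i - m))
    (hne : ∃ i ∈ s, x i ≠ m) (hsum : ∑ i ∈ s, x i = #s * m) :
    ∑ i ∈ s, f (x i) < #s * f m := by
  have hle : ∀ i ∈ s, f (x i) ≤ f m + k * (x i - m) := by
    intro i hi
    by_cases hxi : x i = m
    · simp [hxi]
    · exact (htangent i hi hxi).le
  have hlt : ∃ i ∈ s, f (x i) < f m + k * (x i - m) := by
    obtain ⟨i, hi, hxi⟩ := hne
    exact ⟨i, hi, htangent i hi hxi⟩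
  calc ∑ i ∈ s, f (x i) < ∑ i ∈ s, (f m + k * (x i - m)) := Finset.sum_lt_sum hle hlt
    _ = #s * f m + k * (∑ i ∈ s, x i - #s * m) := by
      rw [sum_add_distrib, ← mul_sum, sum_sub_distrib]
      simp
    _ = #s * f m := by rw [hsum, sub_self, mul_zero, add_zero]

theorem mul_div_add_lt_tangent {R c x m : ℝ} (hR : 0 < R) (hc : 0 < c) (hx : 0 < c + x)
    (hm : 0 < c + m) (hxm : x ≠ m) :
    R * x / (c + x) < R * m / (c + m) + R * c / (c + m) ^ 2 * (x - m) := by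
  have hgap : R * m / (c + m) + R * c / (c + m) ^ 2 * (x - m) - R * x / (c + x)
      = R * c * (x - m) ^ 2 / ((c + m) ^ 2 * (c + x)) := by
    field_simp
    ring
  have hsq : 0 < (x - m) ^ 2 := sq_pos_of_ne_zero (sub_ne_zero.mpr hxm)
  have : 0 < R * c * (x - m) ^ 2 / ((c + m) ^ 2 * (c + x)) := by positivity
  linarith

theorem fiberpool_honest_allocation_optimal_general
    (R P α : ℝ) (hR : 0 < R) (hP : 0 < P) (hα1 : α < 1)
    (N : ℕ) :
    (∑ _i : Fin N, R * (P * α) / (P * (1 - α) + P * α)) = N * R * α ∧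
      ∀ x : Fin N → ℝ, (∀ i, 0 ≤ x i) → (∑ i, x i) = N * P * α →
        (¬ ∀ i, x i = P * α) →
        (∑ i, R * x i / (P * (1 - α) + x i)) < N * R * α := by
  have hhonest : R * (P * α) / (P * (1 - α) + P * α) = R * α := by
    rw [show P * (1 - α) + P * α = P by ring]
    field_simp
  have hc : 0 < P * (1 - α) := mul_pos hP (by linarith)
  refine ⟨by simp [hhonest, mul_assoc], fun x hx hsum hne => ?_⟩
  obtain ⟨j, hj⟩ := not_forall.mp hne
  have hlt := Finset.sum_lt_card_mul_of_lt_tangent univ (fun y => R * y / (P * (1 - α) + y)) x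
    (P * α) _ (fun i _ hi => mul_div_add_lt_tangent hR hc (by linarith [hx i]) (by linarith) hi)
    ⟨j, mem_univ j, hj⟩ (by simp [hsum, mul_assoc])
  simpa [hhonest, mul_assoc] using hlt

/-- Under FiberPool, with per-period reward `R·x/(P(1-α)+x)` for allocating
`x` PoW, a miner with hashrate fraction `α` who allocates `xᵢ = Pα` in every
period earns total reward `N·R·α` over `N` periods (matching honest mining),
and any unequal allocation with the same total PoW `N·P·α` yields strictly
less. -/
theorem fiberpool_honest_allocation_optimal
    (R P α : ℝ) (hR : 0 < R) (hP : 0 < P) (hα0 : 0 < α) (hα1 : α < 1)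
    (N : ℕ) (hN : 1 ≤ N) :
    (∑ _i : Fin N, R * (P * α) / (P * (1 - α) + P * α)) = N * R * α ∧
      ∀ x : Fin N → ℝ, (∀ i, 0 ≤ x i) → (∑ i, x i) = N * P * α →
        (¬ ∀ i, x i = P * α) →
        (∑ i, R * x i / (P * (1 - α) + x i)) < N * R * α :=
  fiberpool_honest_allocation_optimal_general R P α hR hP hα1 N
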